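/- arXiv:1512.07163 — 3 statements merged into one kernel-verified Lean document; each statement's English description precedes it below -/
import Mathlib

section
/- For all ρ > 0, the integral ∫_ρ^∞ dr/(r·√(cosh r − cosh ρ)) is at most π/(2√2·sinh(ρ/2)). -/
/-!
Since `(cosh x - 1) / x² = ∑ x^(2n) / (2n+2)!` has nonnegative coefficients, it increases
in `x ≥ 0`; for `r ≥ ρ` this gives
`ρ² (cosh r - cosh ρ) ≥ (cosh ρ - 1)(r² - ρ²) = 2 sinh²(ρ/2)(r² - ρ²)`.
So the integrand is at most `(√2 sinh (ρ/2))⁻¹ · ρ / (r √(r² - ρ²))`, and the latter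
integrates to `π / 2` over `(ρ, ∞)`, being the derivative of `arccos (ρ / r)`.
-/

open Real MeasureTheory Set Filter Topology
open scoped Nat

namespace Real

lemma hasSum_cosh_sub_one (x : ℝ) :
    HasSum (fun n : ℕ => x ^ (2 * (n + 1)) / ↑(2 * (n + 1))!) (cosh x - 1) := by
  simpa using (hasSum_nat_add_iff' 1).mpr (hasSum_cosh x)

lemma sq_mul_cosh_sub_one_le {ρ r : ℝ} (hρ : 0 ≤ ρ) (hr : ρ ≤ r) :
    r ^ 2 * (cosh ρ - 1) ≤ ρ ^ 2 * (cosh r - 1) := by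
  refine hasSum_le (fun n => ?_) ((hasSum_cosh_sub_one ρ).mul_left _)
    ((hasSum_cosh_sub_one r).mul_left _)
  rw [← mul_div_assoc, ← mul_div_assoc]
  gcongr ?_ / _
  calc r ^ 2 * ρ ^ (2 * (n + 1)) = ρ ^ 2 * (r ^ 2 * ρ ^ (2 * n)) := by ring
    _ ≤ ρ ^ 2 * (r ^ 2 * r ^ (2 * n)) := by gcongr
    _ = ρ ^ 2 * r ^ (2 * (n + 1)) := by ring

lemma cosh_sub_one_eq_two_mul_sinh_half_sq (x : ℝ) : cosh x - 1 = 2 * sinh (x / 2) ^ 2 := by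
  have h := cosh_two_mul (x / 2)
  rw [mul_div_cancel₀ x two_ne_zero] at h
  rw [h, cosh_sq']
  ring

lemma two_mul_sinh_half_sq_mul_le_cosh_sub_cosh {ρ r : ℝ} (hρ : 0 ≤ ρ) (hr : ρ ≤ r) :
    2 * sinh (ρ / 2) ^ 2 * (r ^ 2 - ρ ^ 2) ≤ ρ ^ 2 * (cosh r - cosh ρ) := by
  have := sq_mul_cosh_sub_one_le hρ hr
  rw [← cosh_sub_one_eq_two_mul_sinh_half_sq]
  linarith

lemma hasDerivAt_arccos_div {a x : ℝ} (ha : 0 < a) (hx : a < x) :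
    HasDerivAt (fun r => arccos (a / r)) (a / (x * √(x ^ 2 - a ^ 2))) x := by
  have hx0 : 0 < x := ha.trans hx
  have hsub : 0 < x ^ 2 - a ^ 2 := by nlinarith
  have hinner : HasDerivAt (fun r => a / r) (-(a / x ^ 2)) x := by
    simpa [div_eq_mul_inv] using (hasDerivAt_inv hx0.ne').const_mul a
  have hsqrt : √(1 - (a / x) ^ 2) = √(x ^ 2 - a ^ 2) / x := by
    rw [show 1 - (a / x) ^ 2 = (x ^ 2 - a ^ 2) / x ^ 2 by field_simp, sqrt_div hsub.le,
      sqrt_sq hx0.le]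
  have hlt : a / x < 1 := (div_lt_one hx0).mpr hx
  refine ((hasDerivAt_arccos (by linarith [div_pos ha hx0]) hlt.ne).comp x hinner).congr_deriv ?_
  rw [hsqrt]
  have := sqrt_pos.mpr hsub
  field_simp

lemma tendsto_arccos_div_atTop (a : ℝ) :
    Tendsto (fun r => arccos (a / r)) atTop (𝓝 (π / 2)) := by
  rw [← arccos_zero]
  exact (continuous_arccos.tendsto 0).comp (tendsto_const_nhds.div_atTop tendsto_id)

lemma continuousWithinAt_arccos_div {a : ℝ} (ha : 0 < a) :
    ContinuousWithinAt (fun r => arccos (a / r)) (Ici a) a :=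
  (continuous_arccos.continuousAt.comp
    (continuousAt_const.div continuousAt_id ha.ne')).continuousWithinAt

lemma integrableOn_div_mul_sqrt_sq_sub_sq {a : ℝ} (ha : 0 < a) :
    IntegrableOn (fun x => a / (x * √(x ^ 2 - a ^ 2))) (Ioi a) :=
  integrableOn_Ioi_deriv_of_nonneg (continuousWithinAt_arccos_div ha)
    (fun _ hx => hasDerivAt_arccos_div ha hx)
    (fun x hx => by have := ha.trans hx; positivity) (tendsto_arccos_div_atTop a)

lemma integral_div_mul_sqrt_sq_sub_sq {a : ℝ} (ha : 0 < a) :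
    ∫ x in Ioi a, a / (x * √(x ^ 2 - a ^ 2)) = π / 2 := by
  rw [integral_Ioi_of_hasDerivAt_of_nonneg (continuousWithinAt_arccos_div ha)
    (fun _ hx => hasDerivAt_arccos_div ha hx)
    (fun x hx => by have := ha.trans hx; positivity) (tendsto_arccos_div_atTop a),
    div_self ha.ne', arccos_one, sub_zero]

lemma one_div_mul_sqrt_cosh_sub_cosh_le {ρ r : ℝ} (hρ : 0 < ρ) (hr : ρ < r) :
    1 / (r * √(cosh r - cosh ρ)) ≤
      (√2 * sinh (ρ / 2))⁻¹ * (ρ / (r * √(r ^ 2 - ρ ^ 2))) := by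
  have hr0 : 0 < r := hρ.trans hr
  have hs : 0 < sinh (ρ / 2) := sinh_pos_iff.mpr (half_pos hρ)
  have hsub : 0 < r ^ 2 - ρ ^ 2 := by nlinarith
  have hlower : √2 * sinh (ρ / 2) * √(r ^ 2 - ρ ^ 2) / ρ ≤ √(cosh r - cosh ρ) := by
    rw [le_sqrt' (by positivity), div_pow, mul_pow, mul_pow, sq_sqrt zero_le_two,
      sq_sqrt hsub.le, div_le_iff₀ (by positivity), mul_comm _ (ρ ^ 2)]
    exact two_mul_sinh_half_sq_mul_le_cosh_sub_cosh hρ.le hr.le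
  calc 1 / (r * √(cosh r - cosh ρ))
      ≤ 1 / (r * (√2 * sinh (ρ / 2) * √(r ^ 2 - ρ ^ 2) / ρ)) := by gcongr
    _ = (√2 * sinh (ρ / 2))⁻¹ * (ρ / (r * √(r ^ 2 - ρ ^ 2))) := by
        field_simp

end Real

theorem stmt_0 (ρ : ℝ) (hρ : 0 < ρ) :
    ∫ r in Ioi ρ, 1 / (r * Real.sqrt (Real.cosh r - Real.cosh ρ)) ≤
      π / (2 * Real.sqrt 2 * Real.sinh (ρ / 2)) := by
  calc ∫ r in Ioi ρ, 1 / (r * √(cosh r - cosh ρ))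
      ≤ ∫ r in Ioi ρ, (√2 * sinh (ρ / 2))⁻¹ * (ρ / (r * √(r ^ 2 - ρ ^ 2))) :=
        setIntegral_mono_of_nonneg (fun r hr => by have := hρ.trans hr; positivity)
          (fun _ hr => one_div_mul_sqrt_cosh_sub_cosh_le hρ hr)
          ((integrableOn_div_mul_sqrt_sq_sub_sq hρ).const_mul _)
    _ = π / (2 * √2 * sinh (ρ / 2)) := by
        rw [integral_const_mul, integral_div_mul_sqrt_sq_sub_sq hρ]
        field_simp
end

section
/- Define φ(ρ) = (√2/(2π²)) ∫_ρ^∞ dr/(r·√(cosh r − cosh ρ)) for ρ > 0. Then φ(ρ) ≤ 1/(4π·sinh(ρ/2)) for all ρ > 0. -/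
/-!
Put `a = sinh (ρ / 2)`. Then `cosh r - cosh ρ = 2 (sinh² (r / 2) - a²)`, and `tanh x ≤ x` gives
`1 / r ≤ cosh (r / 2) / (2 sinh (r / 2))`, so the integrand is dominated by the derivative of
`arctan (√(sinh² (r / 2) - a²) / a) / (√2 a)`, which rises from `0` at `r = ρ` to `π / (2 √2 a)`.
Multiplying by `√2 / (2π²)` gives exactly `1 / (4π a)`.
-/

open Real MeasureTheory Set Filter Topology

namespace Real

lemma cosh_sub_cosh_eq (x y : ℝ) :
    cosh x - cosh y = 2 * (sinh (x / 2) ^ 2 - sinh (y / 2) ^ 2) := by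
  have h (t : ℝ) : cosh t = 2 * sinh (t / 2) ^ 2 + 1 := by
    nth_rewrite 1 [← mul_div_cancel₀ t two_ne_zero]
    rw [cosh_two_mul, cosh_sq]
    ring
  rw [h x, h y]
  ring

lemma sinh_le_mul_cosh {x : ℝ} (hx : 0 ≤ x) : sinh x ≤ x * cosh x := by
  rcases hx.eq_or_lt with rfl | hx
  · simp
  obtain ⟨c, hc, hslope⟩ := exists_hasDerivAt_eq_slope sinh cosh hx
    continuous_sinh.continuousOn fun c _ => hasDerivAt_sinh c
  rw [sinh_zero, sub_zero, sub_zero, eq_div_iff hx.ne'] at hslope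
  have : cosh c ≤ cosh x := cosh_le_cosh.2 (abs_le_abs_of_nonneg hc.1.le hc.2.le)
  nlinarith

lemma hasDerivAt_arctan_sqrt_sq_sub_sq_div {a u : ℝ} (ha : 0 < a) (hu : a < u) :
    HasDerivAt (fun u => arctan (√(u ^ 2 - a ^ 2) / a)) (a / (u * √(u ^ 2 - a ^ 2))) u := by
  have hv : 0 < u ^ 2 - a ^ 2 := by nlinarith
  have hu0 : 0 < u := ha.trans hu
  convert ((((hasDerivAt_pow 2 u).sub_const (a ^ 2)).sqrt hv.ne').div_const a).arctan using 1
  rw [div_pow, sq_sqrt hv.le]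
  field_simp
  ring

lemma tendsto_arctan_sqrt_sq_sub_sq_div {a : ℝ} (ha : 0 < a) :
    Tendsto (fun u => arctan (√(u ^ 2 - a ^ 2) / a)) atTop (𝓝 (π / 2)) :=
  (tendsto_arctan_atTop.mono_right nhdsWithin_le_nhds).comp <|
    (tendsto_sqrt_atTop.comp <| tendsto_atTop_add_const_right _ _ <|
      tendsto_pow_atTop two_ne_zero).atTop_div_const ha

end Real

theorem setIntegral_Ioi_le_of_le_hasDerivAt {f g g' : ℝ → ℝ} {a L : ℝ}
    (hcont : ContinuousWithinAt g (Ici a) a) (hderiv : ∀ x ∈ Ioi a, HasDerivAt g (g' x) x)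
    (hg'_nonneg : ∀ x ∈ Ioi a, 0 ≤ g' x) (hg : Tendsto g atTop (𝓝 L))
    (hfg : ∀ x ∈ Ioi a, f x ≤ g' x) : ∫ x in Ioi a, f x ≤ L - g a := by
  rw [← integral_Ioi_of_hasDerivAt_of_nonneg hcont hderiv hg'_nonneg hg]
  by_cases hf : IntegrableOn f (Ioi a)
  · exact setIntegral_mono_on hf (integrableOn_Ioi_deriv_of_nonneg hcont hderiv hg'_nonneg hg)
      measurableSet_Ioi hfg
  · rw [integral_undef hf]
    exact setIntegral_nonneg measurableSet_Ioi hg'_nonneg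

lemma one_div_mul_sqrt_cosh_sub_cosh_le {ρ r : ℝ} (hρ : 0 < ρ) (hr : ρ < r) :
    1 / (r * √(cosh r - cosh ρ)) ≤
      cosh (r / 2) / (2 * √2 * sinh (r / 2) * √(sinh (r / 2) ^ 2 - sinh (ρ / 2) ^ 2)) := by
  have hr0 : 0 < r := hρ.trans hr
  have hsinh : 0 < sinh (r / 2) := sinh_pos_iff.2 (by linarith)
  have hv : 0 < sinh (r / 2) ^ 2 - sinh (ρ / 2) ^ 2 := by
    have := sinh_lt_sinh.2 (show ρ / 2 < r / 2 by linarith)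
    nlinarith [sinh_pos_iff.2 (show 0 < ρ / 2 by linarith)]
  have hsqrt : 0 < √(sinh (r / 2) ^ 2 - sinh (ρ / 2) ^ 2) := sqrt_pos.2 hv
  have hkey : 2 * sinh (r / 2) ≤ r * cosh (r / 2) := by
    linarith [sinh_le_mul_cosh (x := r / 2) (by linarith)]
  rw [cosh_sub_cosh_eq, sqrt_mul zero_le_two, div_le_div_iff₀ (by positivity) (by positivity)]
  have := sqrt_pos.2 (zero_lt_two' ℝ)
  nlinarith [mul_pos this hsqrt]

lemma integral_one_div_mul_sqrt_cosh_sub_cosh_le {ρ : ℝ} (hρ : 0 < ρ) :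
    ∫ r in Ioi ρ, 1 / (r * √(cosh r - cosh ρ)) ≤ π / (2 * √2 * sinh (ρ / 2)) := by
  set a := sinh (ρ / 2)
  have ha : 0 < a := sinh_pos_iff.2 (by linarith)
  have hsinh_half (r : ℝ) : HasDerivAt (fun r => sinh (r / 2)) (cosh (r / 2) / 2) r := by
    simpa [div_eq_mul_inv] using ((hasDerivAt_id r).div_const 2).sinh
  refine (setIntegral_Ioi_le_of_le_hasDerivAt
    (g := fun r => arctan (√(sinh (r / 2) ^ 2 - a ^ 2) / a) / (√2 * a))
    (L := π / 2 / (√2 * a))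
    (g' := fun r => cosh (r / 2) / (2 * √2 * sinh (r / 2) * √(sinh (r / 2) ^ 2 - a ^ 2)))
    (by fun_prop) ?_ ?_ ?_ fun r hr => one_div_mul_sqrt_cosh_sub_cosh_le hρ hr).trans_eq ?_
  · intro r hr
    have hr' : a < sinh (r / 2) := sinh_lt_sinh.2 (by linarith [mem_Ioi.1 hr])
    refine (((hasDerivAt_arctan_sqrt_sq_sub_sq_div ha hr').comp r (hsinh_half r)).div_const
      (√2 * a)).congr_deriv ?_
    field_simp
  · intro r hr
    have hr' : 0 < sinh (r / 2) := sinh_pos_iff.2 (by linarith [mem_Ioi.1 hr])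
    positivity
  · exact ((tendsto_arctan_sqrt_sq_sub_sq_div ha).comp <| sinhOrderIso.tendsto_atTop.comp <|
      tendsto_id.atTop_div_const two_pos).div_const _
  · simp [field]

theorem stmt_5
    (φ : ℝ → ℝ)
    (hφ : ∀ ρ > 0, φ ρ =
      Real.sqrt 2 / (2 * π ^ 2) *
        ∫ r in Ioi ρ, 1 / (r * Real.sqrt (Real.cosh r - Real.cosh ρ))) :
    ∀ ρ > 0, φ ρ ≤ 1 / (4 * π * Real.sinh (ρ / 2)) := by
  intro ρ hρ
  have ha : 0 < sinh (ρ / 2) := sinh_pos_iff.2 (by linarith)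
  calc φ ρ ≤ √2 / (2 * π ^ 2) * (π / (2 * √2 * sinh (ρ / 2))) := by
        rw [hφ ρ hρ]
        gcongr
        exact integral_one_div_mul_sqrt_cosh_sub_cosh_le hρ
    _ = 1 / (4 * π * sinh (ρ / 2)) := by
        field_simp
        ring
end

section
/- Let G : Ω → 𝔹 and f : Ω → 𝔹 be holomorphic on an open set Ω ⊂ ℂ with z₀ ∈ Ω, where G is bijective onto 𝔹, f is injective, G(z₀) = f(z₀) = 0, G′(z₀) > 0 and f′(z₀) > 0. Then G′(z₀) ≥ f′(z₀). -/
/-!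
Since `G` is injective and holomorphic it is not locally constant, so by the open mapping theorem
its inverse `G⁻¹ : 𝔹 → Ω` is continuous; it is holomorphic wherever `G' ≠ 0`, and as the zeros of
`G'` are isolated, the removable singularity theorem makes it holomorphic on all of `𝔹`. The
Schwarz lemma applied to `f ∘ G⁻¹ : 𝔹 → 𝔹` then gives `|f'(z₀) / G'(z₀)| ≤ 1`.
-/

open Complex Filter Function Metric Set Topology

theorem Set.InjOn.not_eventuallyConst_nhds {X Y : Type*} [TopologicalSpace X] {f : X → Y}
    {s : Set X} {x : X} [(𝓝[≠] x).NeBot] (hf : InjOn f s) (hs : s ∈ 𝓝 x) :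
    ¬EventuallyConst f (𝓝 x) := by
  have : Nonempty Y := ⟨f x⟩
  rw [eventuallyConst_iff_exists_eventuallyEq]
  rintro ⟨c, hc⟩
  have hfx : f x = c := hc.self_of_nhds
  have hloc : ∀ᶠ y in 𝓝 x, y = x := by
    filter_upwards [hc, hs] with y hy hys
    exact hf hys (mem_of_mem_nhds hs) (hy.trans hfx.symm)
  obtain ⟨y, hyx, hne⟩ := ((eventually_nhdsWithin_of_eventually_nhds hloc).and
    (self_mem_nhdsWithin : {x}ᶜ ∈ 𝓝[≠] x)).exists
  exact hne hyx

theorem AnalyticAt.eventually_deriv_ne_zero {𝕜 E : Type*} [NontriviallyNormedField 𝕜]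
    [CharZero 𝕜] [NormedAddCommGroup E] [NormedSpace 𝕜 E] [CompleteSpace E] {f : 𝕜 → E} {z : 𝕜}
    (hf : AnalyticAt 𝕜 f z) (hnc : ¬EventuallyConst f (𝓝 z)) :
    ∀ᶠ y in 𝓝[≠] z, deriv f y ≠ 0 := by
  refine hf.deriv.eventually_eq_zero_or_eventually_ne_zero.resolve_left fun h ↦ hnc ?_
  rw [eventuallyConst_iff_analyticOrderAt_sub_eq_top, ← hf.analyticOrderAt_deriv_add_one,
    analyticOrderAt_eq_top.2 h, top_add]

theorem continuousAt_of_leftInverse_of_nhds_le_map {X Y : Type*} [TopologicalSpace X]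
    [TopologicalSpace Y] {f : X → Y} {g : Y → X} {x : X} (hgf : ∀ᶠ y in 𝓝 x, g (f y) = y)
    (hf : 𝓝 (f x) ≤ map f (𝓝 x)) : ContinuousAt g (f x) := by
  rw [ContinuousAt, (hgf.self_of_nhds : g (f x) = x)]
  calc map g (𝓝 (f x)) ≤ map g (map f (𝓝 x)) := map_mono hf
    _ = 𝓝 x := by rw [map_map, map_congr (show g ∘ f =ᶠ[𝓝 x] id from hgf), map_id]

namespace AnalyticOnNhd

variable {G : ℂ → ℂ} {Ω : Set ℂ} {z : ℂ}

theorem nhds_le_map_nhds_of_injOn (hG : AnalyticOnNhd ℂ G Ω) (hΩ : IsOpen Ω)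
    (hinj : InjOn G Ω) (hz : z ∈ Ω) : 𝓝 (G z) ≤ map G (𝓝 z) :=
  (hG z hz).eventually_constant_or_nhds_le_map_nhds.resolve_left fun h ↦
    hinj.not_eventuallyConst_nhds (hΩ.mem_nhds hz)
      (eventuallyConst_iff_exists_eventuallyEq.2 ⟨_, h⟩)

theorem eventually_apply_invFunOn (hG : AnalyticOnNhd ℂ G Ω) (hΩ : IsOpen Ω)
    (hinj : InjOn G Ω) (hz : z ∈ Ω) : ∀ᶠ w in 𝓝 (G z), G (invFunOn G Ω w) = w := by
  filter_upwards [hG.nhds_le_map_nhds_of_injOn hΩ hinj hz (image_mem_map (hΩ.mem_nhds hz))]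
    with w hw
  exact invFunOn_eq hw

theorem continuousAt_invFunOn (hG : AnalyticOnNhd ℂ G Ω) (hΩ : IsOpen Ω)
    (hinj : InjOn G Ω) (hz : z ∈ Ω) : ContinuousAt (invFunOn G Ω) (G z) :=
  continuousAt_of_leftInverse_of_nhds_le_map
    (eventually_of_mem (hΩ.mem_nhds hz) fun _ hy ↦ hinj.leftInvOn_invFunOn hy)
    (hG.nhds_le_map_nhds_of_injOn hΩ hinj hz)

theorem hasStrictDerivAt_invFunOn (hG : AnalyticOnNhd ℂ G Ω) (hΩ : IsOpen Ω)
    (hinj : InjOn G Ω) (hz : z ∈ Ω) (hG' : deriv G z ≠ 0) :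
    HasStrictDerivAt (invFunOn G Ω) (deriv G z)⁻¹ (G z) := by
  refine HasStrictDerivAt.of_local_left_inverse (hG.continuousAt_invFunOn hΩ hinj hz) ?_ hG'
    (hG.eventually_apply_invFunOn hΩ hinj hz)
  rw [hinj.leftInvOn_invFunOn hz]
  exact (hG z hz).hasStrictDerivAt

theorem differentiableOn_invFunOn (hG : AnalyticOnNhd ℂ G Ω) (hΩ : IsOpen Ω)
    (hinj : InjOn G Ω) : DifferentiableOn ℂ (invFunOn G Ω) (G '' Ω) := by
  rintro _ ⟨z, hz, rfl⟩
  have hpunct : Tendsto (invFunOn G Ω) (𝓝[≠] (G z)) (𝓝[≠] z) := by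
    have hcont : Tendsto (invFunOn G Ω) (𝓝 (G z)) (𝓝 z) := by
      simpa only [ContinuousAt, hinj.leftInvOn_invFunOn hz] using
        hG.continuousAt_invFunOn hΩ hinj hz
    refine tendsto_nhdsWithin_of_tendsto_nhds_of_eventually_within _
      (hcont.mono_left nhdsWithin_le_nhds) ?_
    filter_upwards [self_mem_nhdsWithin,
      nhdsWithin_le_nhds (hG.eventually_apply_invFunOn hΩ hinj hz)] with w hw hGw hwz
    exact hw (hGw.symm.trans (congrArg G hwz))
  have hregular : ∀ᶠ x in 𝓝[≠] z, x ∈ Ω ∧ deriv G x ≠ 0 :=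
    (eventually_nhdsWithin_of_eventually_nhds (hΩ.eventually_mem hz)).and
      ((hG z hz).eventually_deriv_ne_zero (hinj.not_eventuallyConst_nhds (hΩ.mem_nhds hz)))
  have hdiff : ∀ᶠ w in 𝓝[≠] (G z), DifferentiableAt ℂ (invFunOn G Ω) w := by
    filter_upwards [hpunct.eventually hregular,
      nhdsWithin_le_nhds (hG.eventually_apply_invFunOn hΩ hinj hz)] with w ⟨hwΩ, hw'⟩ hGw
    rw [← hGw]
    exact (hG.hasStrictDerivAt_invFunOn hΩ hinj hwΩ hw').hasDerivAt.differentiableAt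
  exact (analyticAt_of_differentiable_on_punctured_nhds_of_continuousAt hdiff
    (hG.continuousAt_invFunOn hΩ hinj hz)).differentiableAt.differentiableWithinAt

end AnalyticOnNhd

theorem stmt_14_general (Ω : Set ℂ) (hopen : IsOpen Ω) (z₀ : ℂ) (hz₀ : z₀ ∈ Ω)
    (G f : ℂ → ℂ)
    (hG : DifferentiableOn ℂ G Ω) (hf : DifferentiableOn ℂ f Ω)
    (hGbij : Set.BijOn G Ω (Metric.ball (0 : ℂ) 1))
    (hfmaps : Set.MapsTo f Ω (Metric.ball (0 : ℂ) 1))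
    (hG0 : G z₀ = 0) (hf0 : f z₀ = 0)
    (hG' : 0 < (deriv G z₀).re) (hG'im : (deriv G z₀).im = 0) :
    (deriv f z₀).re ≤ (deriv G z₀).re := by
  set Ginv := invFunOn G Ω
  have hGan := hG.analyticOnNhd hopen
  have hGinv0 : Ginv 0 = z₀ := hG0 ▸ hGbij.injOn.leftInvOn_invFunOn hz₀
  have hG'ne : deriv G z₀ ≠ 0 := fun h ↦ by simp [h] at hG'
  have hGinv : MapsTo Ginv (ball 0 1) Ω := hGbij.surjOn.mapsTo_invFunOn
  have hdiff : DifferentiableOn ℂ (f ∘ Ginv) (ball 0 1) :=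
    hf.comp (hGbij.image_eq ▸ hGan.differentiableOn_invFunOn hopen hGbij.injOn) hGinv
  have hderiv : deriv (f ∘ Ginv) 0 = deriv f z₀ * (deriv G z₀)⁻¹ := by
    have hGinv' := hGan.hasStrictDerivAt_invFunOn hopen hGbij.injOn hz₀ hG'ne
    rw [hG0] at hGinv'
    have hf' : HasDerivAt f (deriv f z₀) (Ginv 0) :=
      hGinv0 ▸ (hf.differentiableAt (hopen.mem_nhds hz₀)).hasDerivAt
    exact (hf'.comp 0 hGinv'.hasDerivAt).deriv
  have hnorm : ‖deriv f z₀‖ ≤ ‖deriv G z₀‖ := by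
    have hschwarz : ‖deriv (f ∘ Ginv) 0‖ ≤ 1 :=
      norm_deriv_le_one_of_mapsTo_ball hdiff (fun w hw ↦ by
        simpa [hGinv0, hf0] using ball_subset_closedBall (hfmaps (hGinv hw))) one_pos
    rwa [hderiv, norm_mul, norm_inv, ← div_eq_mul_inv, div_le_one (norm_pos_iff.2 hG'ne)]
      at hschwarz
  have hGreal : deriv G z₀ = (deriv G z₀).re := Complex.ext rfl (by simpa using hG'im)
  calc (deriv f z₀).re ≤ ‖deriv f z₀‖ := re_le_norm _
    _ ≤ ‖deriv G z₀‖ := hnorm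
    _ = (deriv G z₀).re := by rw [hGreal, norm_real, Real.norm_of_nonneg hG'.le, ofReal_re]

theorem stmt_14 (Ω : Set ℂ) (hopen : IsOpen Ω) (z₀ : ℂ) (hz₀ : z₀ ∈ Ω)
    (G f : ℂ → ℂ)
    (hG : DifferentiableOn ℂ G Ω) (hf : DifferentiableOn ℂ f Ω)
    (hGbij : Set.BijOn G Ω (Metric.ball (0 : ℂ) 1))
    (hfmaps : Set.MapsTo f Ω (Metric.ball (0 : ℂ) 1))
    (hfinj : Set.InjOn f Ω)
    (hG0 : G z₀ = 0) (hf0 : f z₀ = 0)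
    (hG' : 0 < (deriv G z₀).re) (hG'im : (deriv G z₀).im = 0)
    (hf' : 0 < (deriv f z₀).re) (hf'im : (deriv f z₀).im = 0) :
    (deriv f z₀).re ≤ (deriv G z₀).re :=
  stmt_14_general Ω hopen z₀ hz₀ G f hG hf hGbij hfmaps hG0 hf0 hG' hG'im
end
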